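/- arXiv:2210.04448 — 5 statements merged into one kernel-verified Lean document; each statement's English description precedes it below -/
import Mathlib

section
/- Let X ∈ S^n_+, Y ∈ N_{S^n_+}(X), A = X + Y with eigenvalue decomposition as in (eq:eig-decomp), and index sets α, β, γ. Then the set {H ∈ S^n : P_β^T H P_β ∈ S^{|β|}_+, P_β^T H P_γ = 0, P_γ^T H P_γ = 0} is a closed convex cone contained in the tangent cone T_{S^n_+}(X) intersected with Y^⊥. -/
/-!
Membership in the normal cone forces `Y ⪯ 0` and `XY = 0`, so in the eigenbasis `P` of `X + Y`
the two matrices are `diag(λ⁺)` and `diag(λ⁻)`. For `H` in the set, `M = PᵀHP` is positive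
semidefinite on the kernel `β ∪ γ` of `diag(λ⁺)`, and then `diag(λ⁺) + tM + t²c E`, with `E` the
projection onto that kernel, is positive semidefinite for small `t > 0`: off the kernel
`diag(λ⁺)` dominates `tM` through its smallest positive entry, and the cross terms of `tM` are
absorbed by AM-GM into `t²c E`. Hence `H` is a tangent direction at `X`, and
`⟨Y, H⟩ = Σᵢ λᵢ⁻ Mᵢᵢ = 0` because `M_γγ = 0`. Closedness and convexity hold because every
defining condition is closed and linear in `H`.
-/

open Matrix Finset Filter Topology

theorem mem_tangentConeAt_of_eventually_add_smul_add_sq_smul_mem {E : Type*} [AddCommGroup E]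
    [Module ℝ E] [TopologicalSpace E] [IsTopologicalAddGroup E] [ContinuousSMul ℝ E]
    {s : Set E} {x y r : E} (h : ∀ᶠ t in 𝓝[>] (0 : ℝ), x + (t • y + t ^ 2 • r) ∈ s) :
    y ∈ tangentConeAt ℝ s x := by
  refine mem_tangentConeAt_of_seq (𝓝[>] 0) (fun t => t⁻¹) (fun t => t • y + t ^ 2 • r) ?_ h ?_
  · have : Continuous fun t : ℝ => t • y + t ^ 2 • r := by fun_prop
    simpa using (this.tendsto 0).mono_left nhdsWithin_le_nhds
  · have hlim : Tendsto (fun t : ℝ => y + t • r) (𝓝[>] 0) (𝓝 y) := by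
      have : Continuous fun t : ℝ => y + t • r := by fun_prop
      simpa using (this.tendsto 0).mono_left nhdsWithin_le_nhds
    refine hlim.congr' (eventually_nhdsWithin_of_forall fun t (ht : 0 < t) => ?_)
    simp [smul_add, smul_smul, sq, ht.ne']

theorem two_mul_le_mul_add_inv_mul {a b ε : ℝ} (hε : 0 < ε) :
    2 * (a * b) ≤ ε * (a * a) + ε⁻¹ * (b * b) := by
  have h : 0 ≤ ε⁻¹ * (ε * a - b) ^ 2 := by positivity
  have hεε : ε⁻¹ * ε = 1 := inv_mul_cancel₀ hε.ne'
  nlinarith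

variable {ι : Type*} [Fintype ι]

theorem exists_pos_le_of_ne_zero {d : ι → ℝ} (hd : 0 ≤ d) : ∃ L > 0, ∀ i, d i ≠ 0 → L ≤ d i := by
  classical
  rcases (univ.filter (d · ≠ 0)).eq_empty_or_nonempty with h | h
  · exact ⟨1, one_pos, fun i hi => absurd (filter_eq_empty_iff.1 h (mem_univ i)) (not_not.2 hi)⟩
  · obtain ⟨i₀, hi₀, hmin⟩ := exists_min_image _ d h
    exact ⟨d i₀, (hd i₀).lt_of_ne' (mem_filter.1 hi₀).2, fun i hi => hmin i (by simpa using hi)⟩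

theorem Matrix.dotProduct_mulVec_eq_sum (M : Matrix ι ι ℝ) (u w : ι → ℝ) :
    u ⬝ᵥ M *ᵥ w = ∑ i, ∑ j, u i * M i j * w j := by
  simp [dotProduct, mulVec, Finset.mul_sum, mul_assoc]

theorem Matrix.IsSymm.dotProduct_mulVec_comm {M : Matrix ι ι ℝ} (hM : M.IsSymm) (u w : ι → ℝ) :
    w ⬝ᵥ M *ᵥ u = u ⬝ᵥ M *ᵥ w := by
  rw [dotProduct_mulVec, ← mulVec_transpose, hM.eq, dotProduct_comm]

theorem Matrix.IsSymm.transpose_mul_mul {H : Matrix ι ι ℝ} (hH : H.IsSymm) (P : Matrix ι ι ℝ) :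
    (Pᵀ * H * P).IsSymm := by
  simp [IsSymm, Matrix.transpose_mul, hH.eq, Matrix.mul_assoc]

theorem Matrix.two_mul_abs_dotProduct_mulVec_le (M : Matrix ι ι ℝ) (u w : ι → ℝ) {ε : ℝ}
    (hε : 0 < ε) :
    2 * |u ⬝ᵥ M *ᵥ w| ≤ (∑ i, ∑ j, |M i j|) * (ε * (u ⬝ᵥ u) + ε⁻¹ * (w ⬝ᵥ w)) := by
  have hsq : ∀ (v : ι → ℝ) i, v i * v i ≤ v ⬝ᵥ v := fun v i =>
    single_le_sum (f := fun j => v j * v j) (fun j _ => mul_self_nonneg (v j)) (mem_univ i)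
  have hterm : ∀ i j, 2 * |u i * M i j * w j| ≤ |M i j| * (ε * (u ⬝ᵥ u) + ε⁻¹ * (w ⬝ᵥ w)) := by
    intro i j
    calc 2 * |u i * M i j * w j| = |M i j| * (2 * (|u i| * |w j|)) := by
          rw [abs_mul, abs_mul]; ring
      _ ≤ |M i j| * (ε * (|u i| * |u i|) + ε⁻¹ * (|w j| * |w j|)) := by
          gcongr; exact two_mul_le_mul_add_inv_mul hε
      _ ≤ |M i j| * (ε * (u ⬝ᵥ u) + ε⁻¹ * (w ⬝ᵥ w)) := by
          simp only [abs_mul_abs_self]; gcongr <;> apply hsq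
  rw [dotProduct_mulVec_eq_sum]
  calc 2 * |∑ i, ∑ j, u i * M i j * w j| ≤ 2 * ∑ i, ∑ j, |u i * M i j * w j| := by
        gcongr
        exact (abs_sum_le_sum_abs _ _).trans (sum_le_sum fun i _ => abs_sum_le_sum_abs _ _)
    _ = ∑ i, ∑ j, 2 * |u i * M i j * w j| := by simp only [mul_sum]
    _ ≤ ∑ i, ∑ j, |M i j| * (ε * (u ⬝ᵥ u) + ε⁻¹ * (w ⬝ᵥ w)) :=
        sum_le_sum fun i _ => sum_le_sum fun j _ => hterm i j
    _ = _ := by simp only [sum_mul]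

theorem Matrix.neg_le_mul_add_two_mul_dotProduct_mulVec (M : Matrix ι ι ℝ) (u w : ι → ℝ) {L K t : ℝ}
    (hL : 0 < L) (hK : 0 < K) (ht : 0 < t) (hMK : ∑ i, ∑ j, |M i j| ≤ K) (htK : 4 * t * K ≤ L) :
    -(L / 2 * (u ⬝ᵥ u) + t ^ 2 * (4 * K ^ 2 / L) * (w ⬝ᵥ w)) ≤
      t * (u ⬝ᵥ M *ᵥ u + 2 * (u ⬝ᵥ M *ᵥ w)) := by
  set S := ∑ i, ∑ j, |M i j|
  -- this `ε` makes the cross term cost `L/4 ‖u‖²` and `t² (4K²/L) ‖w‖²`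
  set ε := L / (4 * t * K)
  have hε : 0 < ε := by positivity
  have hu : 0 ≤ u ⬝ᵥ u := sum_nonneg fun i _ => mul_self_nonneg (u i)
  have hw : 0 ≤ w ⬝ᵥ w := sum_nonneg fun i _ => mul_self_nonneg (w i)
  have huu := M.two_mul_abs_dotProduct_mulVec_le u u one_pos
  have huw := M.two_mul_abs_dotProduct_mulVec_le u w hε
  have e1 : t * S ≤ L / 4 := by nlinarith
  have e2 : t * S * ε ≤ L / 4 := by
    calc t * S * ε ≤ t * K * ε := by gcongr
      _ = L / 4 := by simp only [ε]; field_simp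
  have e3 : t * S * ε⁻¹ ≤ t ^ 2 * (4 * K ^ 2 / L) := by
    calc t * S * ε⁻¹ ≤ t * K * ε⁻¹ := by gcongr
      _ = t ^ 2 * (4 * K ^ 2 / L) := by simp only [ε]; field_simp
  nlinarith [neg_abs_le (u ⬝ᵥ M *ᵥ u), neg_abs_le (u ⬝ᵥ M *ᵥ w)]

open scoped ComplexOrder MatrixOrder in
theorem Matrix.PosSemidef.mul_eq_zero_of_trace_mul_eq_zero {𝕜 : Type*} [RCLike 𝕜]
    {A B : Matrix ι ι 𝕜} (hA : A.PosSemidef) (hB : B.PosSemidef) (h : (A * B).trace = 0) :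
    A * B = 0 := by
  classical
  obtain ⟨a, rfl⟩ := CStarAlgebra.nonneg_iff_eq_star_mul_self.mp hA.nonneg
  obtain ⟨b, rfl⟩ := CStarAlgebra.nonneg_iff_eq_star_mul_self.mp hB.nonneg
  simp only [star_eq_conjTranspose] at h ⊢
  -- with `A = aᴴa` and `B = bᴴb`, `tr (AB)` is the squared Frobenius norm of `b aᴴ`
  have hba : b * aᴴ = 0 := by
    rw [← trace_conjTranspose_mul_self_eq_zero_iff, ← h, conjTranspose_mul,
      conjTranspose_conjTranspose, ← Matrix.mul_assoc, trace_mul_comm]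
    simp only [Matrix.mul_assoc]
  have hab : a * bᴴ = 0 := by simpa using congrArg (·ᴴ) hba
  rw [Matrix.mul_assoc, ← Matrix.mul_assoc a, hab, Matrix.zero_mul, Matrix.mul_zero]

section NormalCone

variable {X Y : Matrix ι ι ℝ}
    (hNC : ∀ X' : Matrix ι ι ℝ, X'.PosSemidef → ((X' - X) * Y).trace ≤ 0)
include hNC

theorem Matrix.neg_posSemidef_of_forall_trace_sub_mul_nonpos (hX : X.PosSemidef) (hY : Y.IsSymm) :
    (-Y).PosSemidef := by
  refine .of_dotProduct_mulVec_nonneg ?_ fun v => ?_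
  · simp [IsHermitian, conjTranspose_eq_transpose_of_trivial, hY.eq]
  have hv := hNC (X + vecMulVec v v) (hX.add (by simpa using posSemidef_vecMulVec_self_star v))
  rw [add_sub_cancel_left, vecMulVec_mul, trace_vecMulVec, dotProduct_comm,
    ← dotProduct_mulVec] at hv
  simpa [neg_mulVec] using hv

theorem Matrix.trace_mul_eq_zero_of_forall_trace_sub_mul_nonpos (hX : X.PosSemidef) :
    (X * Y).trace = 0 := by
  have h0 := hNC 0 .zero
  have h2 := hNC (X + X) (hX.add hX)
  rw [zero_sub, Matrix.neg_mul, trace_neg] at h0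
  rw [add_sub_cancel_left] at h2
  linarith

theorem Matrix.mul_eq_zero_of_forall_trace_sub_mul_nonpos (hX : X.PosSemidef) (hY : Y.IsSymm) :
    X * Y = 0 := by
  have htr := trace_mul_eq_zero_of_forall_trace_sub_mul_nonpos hNC hX
  have h := hX.mul_eq_zero_of_trace_mul_eq_zero
    (neg_posSemidef_of_forall_trace_sub_mul_nonpos hNC hX hY)
    (by rw [Matrix.mul_neg, trace_neg, htr, neg_zero])
  rwa [Matrix.mul_neg, neg_eq_zero] at h

end NormalCone

section

variable [DecidableEq ι]

theorem Matrix.exists_eventually_posSemidef_diagonal_add_smul_add_sq_smul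
    {d : ι → ℝ} (hd : 0 ≤ d) {M : Matrix ι ι ℝ} (hM : M.IsSymm)
    (hMker : ∀ v : ι → ℝ, (∀ i, d i ≠ 0 → v i = 0) → 0 ≤ v ⬝ᵥ M *ᵥ v) :
    ∃ R : Matrix ι ι ℝ, ∀ᶠ t in 𝓝[>] (0 : ℝ), (diagonal d + (t • M + t ^ 2 • R)).PosSemidef := by
  obtain ⟨L, hL, hLd⟩ := exists_pos_le_of_ne_zero hd
  set K := ∑ i, ∑ j, |M i j| + 1
  have hK : 0 < K := by positivity
  set E : Matrix ι ι ℝ := diagonal fun i => if d i = 0 then 1 else 0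
  refine ⟨(4 * K ^ 2 / L) • E, ?_⟩
  filter_upwards [Ioo_mem_nhdsGT (show 0 < L / (4 * K) by positivity)] with t ⟨ht, htK⟩
  refine .of_dotProduct_mulVec_nonneg ?_ fun x => ?_
  · simp [IsHermitian, conjTranspose_eq_transpose_of_trivial, hM.eq, E]
  set u : ι → ℝ := fun i => if d i = 0 then 0 else x i
  set w : ι → ℝ := fun i => if d i = 0 then x i else 0
  have hx : x = u + w := by ext i; by_cases h : d i = 0 <;> simp [u, w, h]
  have hD : L * (u ⬝ᵥ u) ≤ x ⬝ᵥ diagonal d *ᵥ x := by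
    simp only [dotProduct, mulVec_diagonal, mul_sum]
    refine sum_le_sum fun i _ => ?_
    by_cases h : d i = 0
    · simp [u, h]
    · simp only [u, if_neg h]
      nlinarith [mul_le_mul_of_nonneg_right (hLd i h) (mul_self_nonneg (x i))]
  have hE : x ⬝ᵥ E *ᵥ x = w ⬝ᵥ w := by
    simp only [dotProduct, mulVec_diagonal, E]
    refine sum_congr rfl fun i _ => ?_
    by_cases h : d i = 0 <;> simp [w, h]
  have hMx : u ⬝ᵥ M *ᵥ u + 2 * (u ⬝ᵥ M *ᵥ w) ≤ x ⬝ᵥ M *ᵥ x := by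
    have hw : 0 ≤ w ⬝ᵥ M *ᵥ w := hMker w fun i hi => by simp [w, hi]
    rw [hx, mulVec_add, dotProduct_add, add_dotProduct, add_dotProduct,
      hM.dotProduct_mulVec_comm u w]
    linarith
  have hbound := M.neg_le_mul_add_two_mul_dotProduct_mulVec u w hL hK ht
    (le_add_of_nonneg_right zero_le_one) (by rw [lt_div_iff₀ (by positivity)] at htK; linarith)
  simp only [star_trivial, add_mulVec, smul_mulVec, dotProduct_add, dotProduct_smul, hE,
    smul_eq_mul]
  have hu : 0 ≤ u ⬝ᵥ u := sum_nonneg fun i _ => mul_self_nonneg (u i)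
  nlinarith [mul_le_mul_of_nonneg_left hMx ht.le]

theorem Matrix.mul_transpose_mul_mul_mul_transpose {P : Matrix ι ι ℝ} (hP : Pᵀ * P = 1)
    (B : Matrix ι ι ℝ) : P * (Pᵀ * B * P) * Pᵀ = B :=
  calc P * (Pᵀ * B * P) * Pᵀ = P * Pᵀ * B * (P * Pᵀ) := by simp only [Matrix.mul_assoc]
    _ = B := by rw [mul_eq_one_comm.mp hP, Matrix.one_mul, Matrix.mul_one]

theorem Matrix.trace_mul_eq_trace_transpose_mul_mul {P : Matrix ι ι ℝ} (hP : Pᵀ * P = 1)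
    (Y H : Matrix ι ι ℝ) : (Y * H).trace = (Pᵀ * Y * P * (Pᵀ * H * P)).trace := by
  have hPP : P * Pᵀ = 1 := mul_eq_one_comm.mp hP
  calc (Y * H).trace = (Pᵀ * (Y * H * P)).trace := by
        rw [trace_mul_comm Pᵀ, Matrix.mul_assoc, hPP, Matrix.mul_one]
    _ = (Pᵀ * Y * P * (Pᵀ * H * P)).trace := by
        simp only [Matrix.mul_assoc, ← Matrix.mul_assoc P Pᵀ, hPP, Matrix.one_mul]

theorem Matrix.mem_tangentConeAt_posSemidef {X H P : Matrix ι ι ℝ} {d : ι → ℝ}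
    (hP : Pᵀ * P = 1) (hd : 0 ≤ d) (hX : Pᵀ * X * P = diagonal d) (hH : H.IsSymm)
    (hker : ∀ v : ι → ℝ, (∀ i, d i ≠ 0 → v i = 0) → 0 ≤ v ⬝ᵥ (Pᵀ * H * P) *ᵥ v) :
    H ∈ tangentConeAt ℝ {M : Matrix ι ι ℝ | M.PosSemidef} X := by
  obtain ⟨R, hR⟩ :=
    exists_eventually_posSemidef_diagonal_add_smul_add_sq_smul hd (hH.transpose_mul_mul P) hker
  refine mem_tangentConeAt_of_eventually_add_smul_add_sq_smul_mem (r := P * R * Pᵀ) ?_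
  filter_upwards [hR] with t ht
  have hconj : ∀ B, P * (Pᵀ * B * P) * Pᵀ = B := mul_transpose_mul_mul_mul_transpose hP
  have := ht.mul_mul_conjTranspose_same P
  rw [conjTranspose_eq_transpose_of_trivial, ← hX] at this
  convert this using 1
  simp only [Matrix.mul_add, Matrix.add_mul, Matrix.mul_smul, Matrix.smul_mul, hconj]

theorem Matrix.PosSemidef.apply_eq_zero_of_mul_self_eq_mul_diagonal
    {W : Matrix ι ι ℝ} {d : ι → ℝ} (hW : W.PosSemidef) (hWd : W * W = W * diagonal d) {i : ι}
    (hi : d i ≤ 0) (k : ι) : W i k = 0 := by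
  have hsymm : ∀ j, W j i = W i j := fun j => by simpa using hW.isHermitian.apply i j
  have hrow : W i ⬝ᵥ W i ≤ 0 := by
    calc W i ⬝ᵥ W i = (W * W) i i := by simp [mul_apply, dotProduct, hsymm]
      _ = W i i * d i := by simp [hWd]
      _ ≤ 0 := mul_nonpos_of_nonneg_of_nonpos (hW.diag_nonneg) hi
  have := dotProduct_self_eq_zero.1 (le_antisymm hrow (sum_nonneg fun j _ => mul_self_nonneg _))
  exact congrFun this k

theorem Matrix.eq_diagonal_max_of_posSemidef_of_mul_eq_zero {W Z : Matrix ι ι ℝ}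
    {d : ι → ℝ} (hW : W.PosSemidef) (hZ : (-Z).PosSemidef) (hWZ : W * Z = 0)
    (hsum : W + Z = diagonal d) : W = diagonal fun i => max (d i) 0 := by
  have hWsymm : ∀ i j, W j i = W i j := fun i j => by simpa using hW.isHermitian.apply i j
  have hZsymm : ∀ i j, Z j i = Z i j := fun i j => by simpa using hZ.isHermitian.apply i j
  have hZW : Z * W = 0 := by
    ext i j; simpa [mul_apply, hWsymm, hZsymm, mul_comm] using congrFun (congrFun hWZ j) i
  have hW0 : ∀ i, d i ≤ 0 → ∀ k, W i k = 0 :=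
    fun i => hW.apply_eq_zero_of_mul_self_eq_mul_diagonal
      (by rw [← hsum, Matrix.mul_add, hWZ, add_zero])
  have hZ0 : ∀ i, 0 ≤ d i → ∀ k, Z i k = 0 := fun i hi k => by
    have := hZ.apply_eq_zero_of_mul_self_eq_mul_diagonal (d := -d)
      (by
        rw [show diagonal (-d) = -diagonal d from (diagonal_neg d).symm, ← hsum]
        simp [Matrix.mul_add, hZW]) (i := i) (by simpa using hi) k
    simpa using this
  ext i j
  have hij := congrFun (congrFun hsum i) j
  rcases le_or_gt (d i) 0 with hi | hi
  · rw [hW0 i hi j]; rcases eq_or_ne i j with rfl | h <;> simp [*]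
  rcases le_or_gt (d j) 0 with hj | hj
  · rw [← hWsymm, hW0 j hj i]; rcases eq_or_ne i j with rfl | h <;> simp [*]
  rw [add_apply, hZ0 i hi.le j, add_zero] at hij
  rw [hij]; rcases eq_or_ne i j with rfl | h <;> simp [*, hi.le]

theorem Matrix.transpose_mul_mul_eq_diagonal_of_forall_trace_sub_mul_nonpos {X Y P : Matrix ι ι ℝ}
    {lam : ι → ℝ} (hX : X.PosSemidef) (hY : Y.IsSymm)
    (hNC : ∀ X' : Matrix ι ι ℝ, X'.PosSemidef → ((X' - X) * Y).trace ≤ 0) (hP : Pᵀ * P = 1)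
    (hdecomp : X + Y = P * diagonal lam * Pᵀ) :
    Pᵀ * X * P = diagonal (fun i => max (lam i) 0) ∧
      Pᵀ * Y * P = diagonal (fun i => min (lam i) 0) := by
  have hPP : P * Pᵀ = 1 := mul_eq_one_comm.mp hP
  have hW : (Pᵀ * X * P).PosSemidef := by simpa using hX.conjTranspose_mul_mul_same P
  have hZ : (-(Pᵀ * Y * P)).PosSemidef := by
    simpa using
      (neg_posSemidef_of_forall_trace_sub_mul_nonpos hNC hX hY).conjTranspose_mul_mul_same P
  have hWZ : Pᵀ * X * P * (Pᵀ * Y * P) = 0 := by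
    have hXY := mul_eq_zero_of_forall_trace_sub_mul_nonpos hNC hX hY
    simp only [Matrix.mul_assoc, ← Matrix.mul_assoc P Pᵀ, hPP, Matrix.one_mul,
      ← Matrix.mul_assoc X Y, hXY, Matrix.zero_mul, Matrix.mul_zero]
  have hsum : Pᵀ * X * P + Pᵀ * Y * P = diagonal lam := by
    rw [← Matrix.add_mul, ← Matrix.mul_add, hdecomp]
    simp only [Matrix.mul_assoc, ← Matrix.mul_assoc Pᵀ P, hP, Matrix.one_mul, Matrix.mul_one]
  have hWeq := eq_diagonal_max_of_posSemidef_of_mul_eq_zero hW hZ hWZ hsum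
  refine ⟨hWeq, ?_⟩
  rw [eq_sub_of_add_eq' hsum, hWeq, diagonal_sub]
  congr 1; ext i
  linarith [min_add_max (lam i) 0]

end

theorem Matrix.dotProduct_mulVec_nonneg_of_forall_notMem {M : Matrix ι ι ℝ} (hM : M.IsSymm)
    {β γ : Finset ι} (hββ : ∀ v : ι → ℝ, 0 ≤ ∑ i ∈ β, ∑ j ∈ β, v i * M i j * v j)
    (hβγ : ∀ i ∈ β, ∀ j ∈ γ, M i j = 0) (hγγ : ∀ i ∈ γ, ∀ j ∈ γ, M i j = 0) {v : ι → ℝ}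
    (hv : ∀ i, i ∉ β → i ∉ γ → v i = 0) : 0 ≤ v ⬝ᵥ M *ᵥ v := by
  have hγ : ∀ i j, i ∈ γ → v i * M i j * v j = 0 := by
    intro i j hi
    by_cases hjβ : j ∈ β
    · rw [← hM.apply i j, hβγ j hjβ i hi, mul_zero, zero_mul]
    by_cases hjγ : j ∈ γ
    · rw [hγγ i hi j hjγ, mul_zero, zero_mul]
    · rw [hv j hjβ hjγ, mul_zero]
  have hterm : ∀ i j, i ∉ β ∨ j ∉ β → v i * M i j * v j = 0 := by
    rintro i j (hi | hj)
    · by_cases hiγ : i ∈ γ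
      · exact hγ i j hiγ
      · rw [hv i hi hiγ, zero_mul, zero_mul]
    · by_cases hjγ : j ∈ γ
      · rw [← hM.apply i j]
        linear_combination hγ j i hjγ
      · rw [hv j hj hjγ, mul_zero]
  rw [dotProduct_mulVec_eq_sum, ← sum_subset (subset_univ β) fun i _ hi =>
    sum_eq_zero fun j _ => hterm i j (.inl hi)]
  convert hββ v using 2 with i
  exact (sum_subset (subset_univ β) fun j _ hj => hterm i j (.inr hj)).symm

section CriticalCone

variable (P : Matrix ι ι ℝ) (β γ : Finset ι)

def criticalCone : Set (Matrix ι ι ℝ) :=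
  {H | H.IsSymm
    ∧ (∀ v : ι → ℝ, 0 ≤ ∑ i ∈ β, ∑ j ∈ β, v i * (Pᵀ * H * P) i j * v j)
    ∧ (∀ i ∈ β, ∀ j ∈ γ, (Pᵀ * H * P) i j = 0)
    ∧ (∀ i ∈ γ, ∀ j ∈ γ, (Pᵀ * H * P) i j = 0)}

theorem isClosed_criticalCone : IsClosed (criticalCone P β γ) := by
  have hcont : ∀ i j, Continuous fun H : Matrix ι ι ℝ => (Pᵀ * H * P) i j := fun i j => by
    fun_prop
  simp only [criticalCone, Set.ofPred_and, Set.ofPred_forall]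
  refine .inter (isClosed_eq (by fun_prop) continuous_id) (.inter ?_ (.inter ?_ ?_))
  · exact isClosed_iInter fun v => isClosed_le continuous_const (by fun_prop)
  all_goals exact isClosed_iInter fun i => isClosed_iInter fun _ => isClosed_iInter fun j =>
    isClosed_iInter fun _ => isClosed_eq (hcont i j) continuous_const

variable {P β γ}

theorem add_mem_criticalCone {H₁ H₂ : Matrix ι ι ℝ} (h₁ : H₁ ∈ criticalCone P β γ)
    (h₂ : H₂ ∈ criticalCone P β γ) : H₁ + H₂ ∈ criticalCone P β γ := by
  obtain ⟨hs₁, hq₁, hβγ₁, hγγ₁⟩ := h₁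
  obtain ⟨hs₂, hq₂, hβγ₂, hγγ₂⟩ := h₂
  have hM : Pᵀ * (H₁ + H₂) * P = Pᵀ * H₁ * P + Pᵀ * H₂ * P := by
    rw [Matrix.mul_add, Matrix.add_mul]
  refine ⟨hs₁.add hs₂, fun v => ?_, fun i hi j hj => ?_, fun i hi j hj => ?_⟩
  · simpa [hM, mul_add, add_mul, sum_add_distrib] using add_nonneg (hq₁ v) (hq₂ v)
  · simp [hM, hβγ₁ i hi j hj, hβγ₂ i hi j hj]
  · simp [hM, hγγ₁ i hi j hj, hγγ₂ i hi j hj]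

theorem smul_mem_criticalCone {c : ℝ} (hc : 0 ≤ c) {H : Matrix ι ι ℝ}
    (hH : H ∈ criticalCone P β γ) : c • H ∈ criticalCone P β γ := by
  obtain ⟨hs, hq, hβγ, hγγ⟩ := hH
  have hM : Pᵀ * (c • H) * P = c • (Pᵀ * H * P) := by
    rw [Matrix.mul_smul, Matrix.smul_mul]
  refine ⟨hs.smul c, fun v => ?_, fun i hi j hj => ?_, fun i hi j hj => ?_⟩
  · simpa [hM, mul_sum, mul_assoc, mul_left_comm c] using mul_nonneg hc (hq v)
  · simp [hβγ i hi j hj]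
  · simp [hγγ i hi j hj]

theorem convex_criticalCone : Convex ℝ (criticalCone P β γ) :=
  (ConvexCone.mk (criticalCone P β γ) (fun _ hc _ hH => smul_mem_criticalCone hc.le hH)
    fun _ h₁ _ h₂ => add_mem_criticalCone h₁ h₂).convex

end CriticalCone

theorem stmt5_general {n : ℕ} (X Y A P : Matrix (Fin n) (Fin n) ℝ) (lam : Fin n → ℝ)
    (hX : X.PosSemidef) (hYsymm : Y.IsSymm)
    (hNC : ∀ X' : Matrix (Fin n) (Fin n) ℝ, X'.PosSemidef → ((X' - X) * Y).trace ≤ 0)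
    (hA : A = X + Y) (hP : Pᵀ * P = 1)
    (hdecomp : A = P * Matrix.diagonal lam * Pᵀ) :
    let β : Finset (Fin n) := Finset.univ.filter (fun i => lam i = 0)
    let γ : Finset (Fin n) := Finset.univ.filter (fun i => lam i < 0)
    let C : Set (Matrix (Fin n) (Fin n) ℝ) :=
      {H | H.IsSymm
        ∧ (∀ v : Fin n → ℝ, 0 ≤ ∑ i ∈ β, ∑ j ∈ β, v i * (Pᵀ * H * P) i j * v j)
        ∧ (∀ i ∈ β, ∀ j ∈ γ, (Pᵀ * H * P) i j = 0)
        ∧ (∀ i ∈ γ, ∀ j ∈ γ, (Pᵀ * H * P) i j = 0)}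
    IsClosed C ∧ Convex ℝ C ∧ (∀ c : ℝ, 0 ≤ c → ∀ H ∈ C, c • H ∈ C)
    ∧ C ⊆ tangentConeAt ℝ {M : Matrix (Fin n) (Fin n) ℝ | M.PosSemidef} X
          ∩ {H | (Y * H).trace = 0} := by
  intro β γ C
  obtain ⟨hXdiag, hYdiag⟩ :=
    transpose_mul_mul_eq_diagonal_of_forall_trace_sub_mul_nonpos hX hYsymm hNC hP (hA ▸ hdecomp)
  refine ⟨isClosed_criticalCone P β γ, convex_criticalCone,
    fun c hc H hH => smul_mem_criticalCone hc hH, ?_⟩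
  rintro H ⟨hH, hββ, hβγ, hγγ⟩
  constructor
  · refine mem_tangentConeAt_posSemidef hP (fun i => le_max_right _ _) hXdiag hH fun v hv =>
      dotProduct_mulVec_nonneg_of_forall_notMem (hH.transpose_mul_mul P) hββ hβγ hγγ
        fun i hiβ hiγ => hv i ?_
    simp only [β, γ, mem_filter, mem_univ, true_and, not_lt] at hiβ hiγ
    exact (max_eq_left hiγ).trans_ne hiβ
  · show (Y * H).trace = 0
    rw [trace_mul_eq_trace_transpose_mul_mul hP, hYdiag, trace]
    refine sum_eq_zero fun i _ => ?_
    rcases lt_or_ge (lam i) 0 with hi | hi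
    · simp [diagonal_mul, hγγ i (by simp [γ, hi]) i (by simp [γ, hi])]
    · simp [diagonal_mul, min_eq_right hi]

/-- the critical cone of the PSD cone,
`{H symmetric : Pβᵀ H Pβ PSD, Pβᵀ H Pγ = 0, Pγᵀ H Pγ = 0}`,
is a closed convex cone contained in the (Bouligand) tangent cone of the PSD cone at `X`
intersected with the orthogonal complement of `Y`. -/
theorem stmt5 {n : ℕ} (X Y A P : Matrix (Fin n) (Fin n) ℝ) (lam : Fin n → ℝ)
    (hX : X.PosSemidef) (hYsymm : Y.IsSymm)
    (hNC : ∀ X' : Matrix (Fin n) (Fin n) ℝ, X'.PosSemidef → ((X' - X) * Y).trace ≤ 0)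
    (hA : A = X + Y) (hP : Pᵀ * P = 1) (hlam : Antitone lam)
    (hdecomp : A = P * Matrix.diagonal lam * Pᵀ) :
    let β : Finset (Fin n) := Finset.univ.filter (fun i => lam i = 0)
    let γ : Finset (Fin n) := Finset.univ.filter (fun i => lam i < 0)
    let C : Set (Matrix (Fin n) (Fin n) ℝ) :=
      {H | H.IsSymm
        ∧ (∀ v : Fin n → ℝ, 0 ≤ ∑ i ∈ β, ∑ j ∈ β, v i * (Pᵀ * H * P) i j * v j)
        ∧ (∀ i ∈ β, ∀ j ∈ γ, (Pᵀ * H * P) i j = 0)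
        ∧ (∀ i ∈ γ, ∀ j ∈ γ, (Pᵀ * H * P) i j = 0)}
    IsClosed C ∧ Convex ℝ C ∧ (∀ c : ℝ, 0 ≤ c → ∀ H ∈ C, c • H ∈ C)
    ∧ C ⊆ tangentConeAt ℝ {M : Matrix (Fin n) (Fin n) ℝ | M.PosSemidef} X
          ∩ {H | (Y * H).trace = 0} :=
  stmt5_general X Y A P lam hX hYsymm hNC hA hP hdecomp
end

section
/- Let X ∈ S^n_+, Y ∈ N_{S^n_+}(X), A = X + Y with eigendecomposition with index sets α, β, γ. Then the affine hull of the critical cone C_{S^n_+}(X,Y) = {H : P_β^T H P_β ⪰ 0, P_β^T H P_γ = 0, P_γ^T H P_γ = 0} equals the linear subspace {H ∈ S^n : P_β^T H P_γ = 0, P_γ^T H P_γ = 0}. -/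
open Matrix BigOperators Finset

/-- the affine hull of the critical cone
`{H : Pβᵀ H Pβ ⪰ 0, Pβᵀ H Pγ = 0, Pγᵀ H Pγ = 0}` (within symmetric matrices) is the subspace
`{H symmetric : Pβᵀ H Pγ = 0, Pγᵀ H Pγ = 0}`. -/
theorem stmt6 {n : ℕ} (X Y A P : Matrix (Fin n) (Fin n) ℝ) (lam : Fin n → ℝ)
    (hX : X.PosSemidef) (hYsymm : Y.IsSymm)
    (hNC : ∀ X' : Matrix (Fin n) (Fin n) ℝ, X'.PosSemidef → ((X' - X) * Y).trace ≤ 0)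
    (hA : A = X + Y) (hP : Pᵀ * P = 1) (hlam : Antitone lam)
    (hdecomp : A = P * Matrix.diagonal lam * Pᵀ) :
    let β : Finset (Fin n) := Finset.univ.filter (fun i => lam i = 0)
    let γ : Finset (Fin n) := Finset.univ.filter (fun i => lam i < 0)
    let C : Set (Matrix (Fin n) (Fin n) ℝ) :=
      {H | H.IsSymm
        ∧ (∀ v : Fin n → ℝ, 0 ≤ ∑ i ∈ β, ∑ j ∈ β, v i * (Pᵀ * H * P) i j * v j)
        ∧ (∀ i ∈ β, ∀ j ∈ γ, (Pᵀ * H * P) i j = 0)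
        ∧ (∀ i ∈ γ, ∀ j ∈ γ, (Pᵀ * H * P) i j = 0)}
    (affineSpan ℝ C : Set (Matrix (Fin n) (Fin n) ℝ))
      = {H | H.IsSymm
          ∧ (∀ i ∈ β, ∀ j ∈ γ, (Pᵀ * H * P) i j = 0)
          ∧ (∀ i ∈ γ, ∀ j ∈ γ, (Pᵀ * H * P) i j = 0)} := by
  intro β γ C
  have hPPt : P * Pᵀ = 1 := mul_eq_one_comm.mp hP
  have hβ : ∀ i, i ∈ β ↔ lam i = 0 := by
    intro i; simp [β]
  have hγ : ∀ i, i ∈ γ ↔ lam i < 0 := by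
    intro i; simp [γ]
  -- the target affine subspace
  set Q : AffineSubspace ℝ (Matrix (Fin n) (Fin n) ℝ) :=
    { carrier := {H | H.IsSymm
          ∧ (∀ i ∈ β, ∀ j ∈ γ, (Pᵀ * H * P) i j = 0)
          ∧ (∀ i ∈ γ, ∀ j ∈ γ, (Pᵀ * H * P) i j = 0)}
      smul_vsub_vadd_mem' := by
        rintro c p1 p2 p3 ⟨h1s, h1a, h1b⟩ ⟨h2s, h2a, h2b⟩ ⟨h3s, h3a, h3b⟩
        simp only [vsub_eq_sub, vadd_eq_add, Set.mem_setOf_eq]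
        refine ⟨?_, ?_, ?_⟩
        · show (c • (p1 - p2) + p3)ᵀ = _
          rw [transpose_add, transpose_smul, transpose_sub, h1s, h2s, h3s]
        · intro i hi j hj
          simp only [Matrix.mul_add, Matrix.add_mul, Matrix.mul_smul, Matrix.smul_mul,
            Matrix.mul_sub, Matrix.sub_mul, Matrix.add_apply, Matrix.smul_apply,
            Matrix.sub_apply, smul_eq_mul]
          rw [h1a i hi j hj, h2a i hi j hj, h3a i hi j hj]; ring
        · intro i hi j hj
          simp only [Matrix.mul_add, Matrix.add_mul, Matrix.mul_smul, Matrix.smul_mul,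
            Matrix.mul_sub, Matrix.sub_mul, Matrix.add_apply, Matrix.smul_apply,
            Matrix.sub_apply, smul_eq_mul]
          rw [h1b i hi j hj, h2b i hi j hj, h3b i hi j hj]; ring } with hQ
  apply Set.Subset.antisymm
  · -- affine span ⊆ target
    have hCQ : C ⊆ (Q : Set _) := fun H hH => ⟨hH.1, hH.2.2.1, hH.2.2.2⟩
    have := affineSpan_le.mpr hCQ
    exact this
  · -- target ⊆ affine span
    rintro H ⟨hHs, hHa, hHb⟩
    set B : Matrix (Fin n) (Fin n) ℝ := Pᵀ * H * P with hB
    set t : ℝ := ∑ i ∈ β, ∑ j ∈ β, |B i j| with ht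
    have htnn : 0 ≤ t := Finset.sum_nonneg fun i _ => Finset.sum_nonneg fun j _ => abs_nonneg _
    set d : Fin n → ℝ := fun i => if lam i = 0 then t else 0 with hd
    set E : Matrix (Fin n) (Fin n) ℝ := P * Matrix.diagonal d * Pᵀ with hE
    have hEsymm : E.IsSymm := by
      show Eᵀ = E
      rw [hE, transpose_mul, transpose_mul, transpose_transpose, diagonal_transpose,
        Matrix.mul_assoc]
    have hPEP : Pᵀ * E * P = Matrix.diagonal d := by
      rw [hE, show Pᵀ * (P * Matrix.diagonal d * Pᵀ) * P
          = (Pᵀ * P) * Matrix.diagonal d * (Pᵀ * P) by noncomm_ring, hP, one_mul, mul_one]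
    -- entrywise facts about diagonal d on the relevant blocks
    have hDβγ : ∀ i ∈ β, ∀ j ∈ γ, Matrix.diagonal d i j = 0 := by
      intro i hi j hj
      have hij : i ≠ j := by
        intro h
        have h0 : lam i = 0 := (hβ i).mp hi
        have h1 : lam j < 0 := (hγ j).mp hj
        rw [h] at h0; linarith
      exact Matrix.diagonal_apply_ne d hij
    have hDγγ : ∀ i ∈ γ, ∀ j ∈ γ, Matrix.diagonal d i j = 0 := by
      intro i hi j hj
      rcases eq_or_ne i j with h | h
      · subst h
        rw [Matrix.diagonal_apply_eq, hd]
        simp [((hγ i).mp hi).ne]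
      · exact Matrix.diagonal_apply_ne d h
    -- quadratic form of diagonal d on β×β
    have hquadD : ∀ v : Fin n → ℝ,
        ∑ i ∈ β, ∑ j ∈ β, v i * Matrix.diagonal d i j * v j = ∑ i ∈ β, t * v i ^ 2 := by
      intro v
      refine Finset.sum_congr rfl fun i hi => ?_
      rw [Finset.sum_eq_single i]
      · rw [Matrix.diagonal_apply_eq, hd]
        simp only [(hβ i).mp hi, if_true]; ring
      · intro j _ hji
        rw [Matrix.diagonal_apply_ne d (Ne.symm hji)]; ring
      · intro h; exact absurd hi h
    -- bound on the quadratic form of B on β×β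
    have hquadB : ∀ v : Fin n → ℝ,
        -(∑ i ∈ β, t * v i ^ 2) ≤ ∑ i ∈ β, ∑ j ∈ β, v i * B i j * v j := by
      intro v
      set S2 : ℝ := ∑ k ∈ β, v k ^ 2 with hS2
      have key : ∀ i ∈ β, ∀ j ∈ β, -(|B i j| * S2) ≤ v i * B i j * v j := by
        intro i hi j hj
        have h1 : v i ^ 2 ≤ S2 :=
          Finset.single_le_sum (fun k _ => sq_nonneg (v k)) hi
        have h2 : v j ^ 2 ≤ S2 :=
          Finset.single_le_sum (fun k _ => sq_nonneg (v k)) hj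
        have habs : |v i * v j| ≤ S2 := by
          rw [abs_mul]
          nlinarith [sq_nonneg (|v i| - |v j|), sq_abs (v i), sq_abs (v j),
            abs_nonneg (v i), abs_nonneg (v j)]
        have h3 : |v i * B i j * v j| ≤ |B i j| * S2 := by
          have heq : |v i * B i j * v j| = |B i j| * |v i * v j| := by
            rw [abs_mul, abs_mul, abs_mul]; ring
          rw [heq]
          exact mul_le_mul_of_nonneg_left habs (abs_nonneg _)
        linarith [neg_abs_le (v i * B i j * v j)]
      have step : ∑ i ∈ β, ∑ j ∈ β, -(|B i j| * S2) ≤ ∑ i ∈ β, ∑ j ∈ β, v i * B i j * v j :=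
        Finset.sum_le_sum fun i hi => Finset.sum_le_sum fun j hj => key i hi j hj
      have heq2 : ∑ i ∈ β, ∑ j ∈ β, -(|B i j| * S2) = -(∑ i ∈ β, t * v i ^ 2) := by
        rw [ht]
        rw [show ∑ i ∈ β, (∑ i ∈ β, ∑ j ∈ β, |B i j|) * v i ^ 2
            = (∑ i ∈ β, ∑ j ∈ β, |B i j|) * S2 by rw [Finset.mul_sum]]
        rw [Finset.sum_mul]
        simp only [Finset.sum_mul, Finset.sum_neg_distrib]
      linarith [step, heq2.symm.le]
    -- membership of E and H + E in C
    have hE_mem : E ∈ C := by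
      refine ⟨hEsymm, ?_, ?_, ?_⟩
      · intro v
        rw [hPEP, hquadD]
        exact Finset.sum_nonneg fun i _ => mul_nonneg htnn (sq_nonneg _)
      · intro i hi j hj; rw [hPEP]; exact hDβγ i hi j hj
      · intro i hi j hj; rw [hPEP]; exact hDγγ i hi j hj
    have hHE_mem : H + E ∈ C := by
      have hPHEP : Pᵀ * (H + E) * P = B + Matrix.diagonal d := by
        rw [Matrix.mul_add, Matrix.add_mul, hPEP, hB]
      refine ⟨?_, ?_, ?_, ?_⟩
      · show (H + E)ᵀ = H + E
        rw [transpose_add, hHs, hEsymm]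
      · intro v
        rw [hPHEP]
        have : ∑ i ∈ β, ∑ j ∈ β, v i * (B + Matrix.diagonal d) i j * v j
            = (∑ i ∈ β, ∑ j ∈ β, v i * B i j * v j)
              + ∑ i ∈ β, ∑ j ∈ β, v i * Matrix.diagonal d i j * v j := by
          rw [← Finset.sum_add_distrib]
          refine Finset.sum_congr rfl fun i _ => ?_
          rw [← Finset.sum_add_distrib]
          refine Finset.sum_congr rfl fun j _ => ?_
          rw [Matrix.add_apply]; ring
        rw [this, hquadD]
        linarith [hquadB v]
      · intro i hi j hj
        rw [hPHEP, Matrix.add_apply, hHa i hi j hj, hDβγ i hi j hj, add_zero]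
      · intro i hi j hj
        rw [hPHEP, Matrix.add_apply, hHb i hi j hj, hDγγ i hi j hj, add_zero]
    have h0_mem : (0 : Matrix (Fin n) (Fin n) ℝ) ∈ C := by
      refine ⟨?_, ?_, ?_, ?_⟩
      · show (0 : Matrix (Fin n) (Fin n) ℝ)ᵀ = 0; simp
      · intro v; simp
      · intro i _ j _; simp
      · intro i _ j _; simp
    -- finish: H = 1 • ((H + E) -ᵥ E) +ᵥ 0
    have hmem := AffineSubspace.smul_vsub_vadd_mem (affineSpan ℝ C) (1 : ℝ)
      (subset_affineSpan ℝ C hHE_mem) (subset_affineSpan ℝ C hE_mem)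
      (subset_affineSpan ℝ C h0_mem)
    simpa using hmem
end

section
/- With A = X + Y as above (X ∈ S^n_+, Y ∈ N_{S^n_+}(X)), the σ-term Υ_X(Y, H) := 2⟨Y, H X^† H⟩ satisfies Υ_X(Y, H) = 2 Σ_{i∈α, j∈γ} (λ_j(A)/λ_i(A)) (P^T H P)_{ij}², where X^† is the Moore–Penrose inverse of X. In particular Υ_X(Y, H) ≤ 0 for every H ∈ S^n. -/
/-!
Conjugating by the orthogonal matrix `P` turns the complementarity conditions into
`X' ⪰ 0`, `-Y' ⪰ 0`, `X'Y' = 0`, `X' + Y' = diag λ`. Then `X'² = X' diag λ`, whose `i`-th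
diagonal entry reads `∑ₖ X'ᵢₖ² = X'ᵢᵢ λᵢ`; for `λᵢ ≤ 0` the right side is `≤ 0`, so row `i`
of `X'` vanishes, and symmetrically for `Y'`. Hence `X = P diag λ₊ Pᵀ` and `Y = P diag λ₋ Pᵀ`.
Since `0⁻¹ = 0`, `diag λ₊⁻¹` satisfies the four Penrose conditions for `diag λ₊`, and by
uniqueness of the Moore–Penrose inverse `X† = P diag λ₊⁻¹ Pᵀ`. The trace is then
`∑ᵢⱼ λ₊ᵢ⁻¹ λ₋ⱼ (PᵀHP)ᵢⱼ²`, a sum of squares with nonpositive weights.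
-/

open Matrix BigOperators Finset

namespace Matrix

variable {k m n R : Type*} [Fintype m] [Fintype n]

theorem IsSymm.mul_mul_transpose [CommSemiring R] {A : Matrix n n R} (hA : A.IsSymm)
    (P : Matrix k n R) : (P * A * Pᵀ).IsSymm := by
  simp only [IsSymm, transpose_mul, transpose_transpose, hA.eq, Matrix.mul_assoc]

structure IsMoorePenroseInverse [CommSemiring R] (X : Matrix m n R) (B : Matrix n m R) : Prop where
  mul_mul_self : X * B * X = X
  mul_self_mul : B * X * B = B
  isSymm_self_mul : (X * B).IsSymm
  isSymm_mul_self : (B * X).IsSymm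

theorem IsMoorePenroseInverse.unique [CommSemiring R] {X : Matrix m n R} {B C : Matrix n m R}
    (hB : X.IsMoorePenroseInverse B) (hC : X.IsMoorePenroseInverse C) : B = C := by
  have hXB : X * B = X * C :=
    calc X * B = (X * C * X * B)ᵀ := by rw [hC.mul_mul_self, hB.isSymm_self_mul.eq]
      _ = (X * B)ᵀ * (X * C)ᵀ := by simp only [transpose_mul, Matrix.mul_assoc]
      _ = X * C := by
        rw [hB.isSymm_self_mul.eq, hC.isSymm_self_mul.eq, ← Matrix.mul_assoc, hB.mul_mul_self]
  have hBX : B * X = C * X :=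
    calc B * X = (B * (X * C * X))ᵀ := by rw [hC.mul_mul_self, hB.isSymm_mul_self.eq]
      _ = (C * X)ᵀ * (B * X)ᵀ := by simp only [transpose_mul, Matrix.mul_assoc]
      _ = C * X := by
        rw [hB.isSymm_mul_self.eq, hC.isSymm_mul_self.eq, Matrix.mul_assoc, ← Matrix.mul_assoc X,
          hB.mul_mul_self]
  calc B = B * (X * C) := by rw [← hXB, ← Matrix.mul_assoc, hB.mul_self_mul]
    _ = C := by rw [← Matrix.mul_assoc, hBX, hC.mul_self_mul]

theorem isMoorePenroseInverse_diagonal [DecidableEq n] [Semifield R] (d : n → R) :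
    (diagonal d).IsMoorePenroseInverse (diagonal d⁻¹) where
  mul_mul_self := by simp only [diagonal_mul_diagonal, Pi.inv_apply, mul_inv_mul_cancel]
  mul_self_mul := by
    simp only [diagonal_mul_diagonal]
    congr 1 with i
    simpa only [Pi.inv_apply, inv_inv] using mul_inv_mul_cancel (d i)⁻¹
  isSymm_self_mul := by rw [diagonal_mul_diagonal]; exact isSymm_diagonal _
  isSymm_mul_self := by rw [diagonal_mul_diagonal]; exact isSymm_diagonal _

section Isometry

variable [Fintype k] [DecidableEq n] [CommSemiring R] {P : Matrix k n R}

theorem mul_mul_transpose_mul_mul_mul_transpose (hP : Pᵀ * P = 1) (A B : Matrix n n R) :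
    P * A * Pᵀ * (P * B * Pᵀ) = P * (A * B) * Pᵀ := by
  simp only [Matrix.mul_assoc, ← Matrix.mul_assoc Pᵀ P, hP, Matrix.one_mul]

theorem IsMoorePenroseInverse.mul_mul_transpose (hP : Pᵀ * P = 1) {X B : Matrix n n R}
    (h : X.IsMoorePenroseInverse B) : (P * X * Pᵀ).IsMoorePenroseInverse (P * B * Pᵀ) where
  mul_mul_self := by simp only [mul_mul_transpose_mul_mul_mul_transpose hP, h.mul_mul_self]
  mul_self_mul := by simp only [mul_mul_transpose_mul_mul_mul_transpose hP, h.mul_self_mul]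
  isSymm_self_mul := by
    rw [mul_mul_transpose_mul_mul_mul_transpose hP]; exact h.isSymm_self_mul.mul_mul_transpose P
  isSymm_mul_self := by
    rw [mul_mul_transpose_mul_mul_mul_transpose hP]; exact h.isSymm_mul_self.mul_mul_transpose P

end Isometry

theorem trace_diagonal_mul_transpose_mul_diagonal_mul [DecidableEq n] [CommSemiring R]
    (a b : n → R) (M : Matrix n n R) :
    trace (diagonal a * Mᵀ * diagonal b * M) = ∑ i, ∑ j, b i * a j * M i j ^ 2 := by
  rw [Finset.sum_comm]
  simp only [trace, diag_apply, mul_apply (N := M), mul_diagonal, diagonal_mul, transpose_apply]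
  refine Finset.sum_congr rfl fun j _ => Finset.sum_congr rfl fun i _ => ?_
  ring

theorem PosSemidef.apply_eq_zero_of_mul_self_eq_mul_diagonal_s7 [DecidableEq n]
    {M : Matrix n n ℝ} (hM : M.PosSemidef) {d : n → ℝ} (h : M * M = M * diagonal d) {i : n}
    (hi : d i ≤ 0) (j : n) : M i j = 0 := by
  have hrow : ∑ k, M i k ^ 2 = M i i * d i := by
    have := congrFun (congrFun h i) i
    rw [mul_diagonal, mul_apply] at this
    rw [← this]
    refine Finset.sum_congr rfl fun k _ => ?_
    rw [sq, ← hM.isHermitian.apply i k, star_trivial]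
  have hle : ∑ k, M i k ^ 2 ≤ 0 := hrow ▸ mul_nonpos_of_nonneg_of_nonpos hM.diag_nonneg hi
  exact pow_eq_zero_iff two_ne_zero |>.mp <|
    (Finset.sum_eq_zero_iff_of_nonneg fun k _ => sq_nonneg _).mp
      (le_antisymm hle (Finset.sum_nonneg fun k _ => sq_nonneg _)) j (Finset.mem_univ j)

theorem eq_diagonal_max_of_add_eq_diagonal [DecidableEq n] {X Y : Matrix n n ℝ} {d : n → ℝ}
    (hX : X.PosSemidef) (hY : (-Y).PosSemidef) (hXY : X * Y = 0) (hsum : X + Y = diagonal d) :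
    X = diagonal fun i => max (d i) 0 := by
  have hYX : Y * X = 0 := by
    have hXt : Xᵀ = X := (isHermitian_iff_isSymm.mp hX.isHermitian).eq
    have hYt : Yᵀ = Y := by
      simpa only [transpose_neg, neg_inj] using (isHermitian_iff_isSymm.mp hY.isHermitian).eq
    simpa only [transpose_mul, transpose_zero, hXt, hYt] using congrArg transpose hXY
  have hX_row : ∀ i, d i ≤ 0 → ∀ k, X i k = 0 := fun i =>
    hX.apply_eq_zero_of_mul_self_eq_mul_diagonal_s7 (by rw [← hsum, Matrix.mul_add, hXY, add_zero])
  have hY_row : ∀ i, 0 ≤ d i → ∀ k, Y i k = 0 := by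
    have hY2 : -Y * -Y = -Y * diagonal fun i => -d i := by
      rw [neg_mul_neg, ← diagonal_neg, Matrix.mul_neg, Matrix.neg_mul, neg_neg, ← hsum,
        Matrix.mul_add, hYX, zero_add]
    intro i hi k
    exact neg_eq_zero.mp <| hY.apply_eq_zero_of_mul_self_eq_mul_diagonal_s7 hY2 (neg_nonpos.mpr hi) k
  ext i k
  rcases le_or_gt (d i) 0 with hi | hi
  · rw [hX_row i hi k, diagonal_apply, max_eq_right hi, ite_self]
  · have hXd : X i k = diagonal d i k := by rw [← hsum, add_apply, hY_row i hi.le k, add_zero]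
    rw [hXd, diagonal_apply, diagonal_apply, max_eq_left hi.le]

theorem eq_mul_diagonal_max_mul_transpose_of_add_eq [DecidableEq n] {X Y P : Matrix n n ℝ}
    {d : n → ℝ} (hP : Pᵀ * P = 1) (hX : X.PosSemidef) (hY : (-Y).PosSemidef) (hXY : X * Y = 0)
    (hsum : X + Y = P * diagonal d * Pᵀ) : X = P * (diagonal fun i => max (d i) 0) * Pᵀ := by
  have hPPt : P * Pᵀ = 1 := mul_eq_one_comm.mp hP
  have hPt : Pᵀᵀ * Pᵀ = 1 := by rwa [transpose_transpose]
  have hconj : P * (Pᵀ * X * P) * Pᵀ = X := by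
    simp only [← Matrix.mul_assoc, hPPt, Matrix.one_mul]
    rw [Matrix.mul_assoc, hPPt, Matrix.mul_one]
  rw [← hconj, eq_diagonal_max_of_add_eq_diagonal (X := Pᵀ * X * P) (Y := Pᵀ * Y * P)]
  · simpa only [conjTranspose_eq_transpose_of_trivial] using hX.conjTranspose_mul_mul_same P
  · simpa only [conjTranspose_eq_transpose_of_trivial, Matrix.mul_neg, Matrix.neg_mul] using
      hY.conjTranspose_mul_mul_same P
  · simpa only [transpose_transpose, hXY, Matrix.mul_zero, Matrix.zero_mul] using
      mul_mul_transpose_mul_mul_mul_transpose hPt X Y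
  · rw [← Matrix.add_mul, ← Matrix.mul_add, hsum]
    simp only [← Matrix.mul_assoc, hP, Matrix.one_mul]
    rw [Matrix.mul_assoc, hP, Matrix.mul_one]

theorem trace_mul_mul_transpose_mul_mul_mul_transpose [Fintype k] [CommSemiring R]
    (P : Matrix k n R) (A B : Matrix n n R) (H : Matrix k k R) :
    trace (P * A * Pᵀ * (H * (P * B * Pᵀ) * H))
      = trace (A * (Pᵀ * H * P) * B * (Pᵀ * H * P)) := by
  rw [show P * A * Pᵀ * (H * (P * B * Pᵀ) * H) = P * (A * Pᵀ * H * P * B * Pᵀ * H) by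
    simp only [Matrix.mul_assoc], trace_mul_comm]
  simp only [Matrix.mul_assoc]

end Matrix

theorem sum_inv_max_mul_min_eq_sum_filter {ι : Type*} [Fintype ι] (d : ι → ℝ)
    (c : ι → ι → ℝ) :
    ∑ i, ∑ j, (max (d i) 0)⁻¹ * min (d j) 0 * c i j
      = ∑ i ∈ univ.filter (fun i => 0 < d i), ∑ j ∈ univ.filter (fun j => d j < 0),
          d j / d i * c i j := by
  simp only [Finset.sum_filter]
  refine Finset.sum_congr rfl fun i _ => ?_
  split_ifs with hi
  · refine Finset.sum_congr rfl fun j _ => ?_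
    split_ifs with hj
    · rw [max_eq_left hi.le, min_eq_left hj.le, div_eq_mul_inv, mul_comm (d j)]
    · rw [min_eq_right (not_lt.mp hj), mul_zero, zero_mul]
  · simp only [max_eq_right (not_lt.mp hi), _root_.inv_zero, zero_mul, Finset.sum_const_zero]

/-- explicit form and nonpositivity of the sigma-term
`Υ_X(Y,H) = 2⟨Y, H X† H⟩` for `X ⪰ 0`, `Y ⪯ 0`, `XY = 0`, where `X†` is the Moore–Penrose
inverse of `X` (characterized by the four Penrose conditions) and `A = X + Y = P Λ Pᵀ`. -/
theorem stmt7 {n : ℕ} (X Y A P Xdag H : Matrix (Fin n) (Fin n) ℝ) (lam : Fin n → ℝ)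
    (hX : X.PosSemidef) (hY : (-Y).PosSemidef) (hXY : X * Y = 0)
    (hA : A = X + Y) (hP : Pᵀ * P = 1)
    (hdecomp : A = P * Matrix.diagonal lam * Pᵀ)
    (hH : H.IsSymm)
    (hpen1 : X * Xdag * X = X) (hpen2 : Xdag * X * Xdag = Xdag)
    (hpen3 : (X * Xdag).IsSymm) (hpen4 : (Xdag * X).IsSymm) :
    2 * (Y * (H * Xdag * H)).trace
      = 2 * ∑ i ∈ Finset.univ.filter (fun i => 0 < lam i),
            ∑ j ∈ Finset.univ.filter (fun j => lam j < 0),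
              (lam j / lam i) * ((Pᵀ * H * P) i j)^2
    ∧ 2 * (Y * (H * Xdag * H)).trace ≤ 0 := by
  subst hA
  set lamPos : Fin n → ℝ := fun i => max (lam i) 0
  set lamNeg : Fin n → ℝ := fun i => min (lam i) 0
  set M := Pᵀ * H * P
  have hXeq : X = P * diagonal lamPos * Pᵀ :=
    eq_mul_diagonal_max_mul_transpose_of_add_eq hP hX hY hXY hdecomp
  have hYeq : Y = P * diagonal lamNeg * Pᵀ := by
    rw [eq_sub_of_add_eq' hdecomp, hXeq, ← Matrix.sub_mul, ← Matrix.mul_sub, diagonal_sub]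
    congr 3 with i
    linarith [min_add_max (lam i) 0]
  have hXdag : Xdag = P * diagonal lamPos⁻¹ * Pᵀ :=
    IsMoorePenroseInverse.unique ⟨hpen1, hpen2, hpen3, hpen4⟩
      (hXeq ▸ (isMoorePenroseInverse_diagonal lamPos).mul_mul_transpose hP)
  have hM : Mᵀ = M := (hH.mul_mul_transpose Pᵀ).eq
  have htrace : (Y * (H * Xdag * H)).trace
      = ∑ i, ∑ j, (max (lam i) 0)⁻¹ * min (lam j) 0 * M i j ^ 2 :=
    calc (Y * (H * Xdag * H)).trace
        = trace (diagonal lamNeg * M * diagonal lamPos⁻¹ * M) := by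
          rw [hYeq, hXdag, trace_mul_mul_transpose_mul_mul_mul_transpose]
      _ = trace (diagonal lamNeg * Mᵀ * diagonal lamPos⁻¹ * M) := by rw [hM]
      _ = _ := trace_diagonal_mul_transpose_mul_diagonal_mul lamNeg lamPos⁻¹ M
  rw [htrace, sum_inv_max_mul_min_eq_sum_filter]
  refine ⟨rfl, mul_nonpos_of_nonneg_of_nonpos zero_le_two <| sum_nonpos fun i hi => sum_nonpos
    fun j hj => mul_nonpos_of_nonpos_of_nonneg ?_ (sq_nonneg _)⟩
  exact div_nonpos_of_nonpos_of_nonneg (mem_filter.mp hj).2.le (mem_filter.mp hi).2.le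
end

section
/- Let G₁ ⊆ S^n be an affine subspace (a polyhedron) and G₂ a closed convex set with G₁ ∩ G₂ ≠ ∅. If there exists a point Ỹ ∈ G₁ ∩ ri(G₂) (relative interior), then for every bounded set B there is κ > 0 such that dist(Y, G₁ ∩ G₂) ≤ κ max{dist(Y, G₁), dist(Y, G₂)} for all Y ∈ B. -/
/-!
Two subspaces `V`, `W` of a finite-dimensional space are linearly regular: the map
`x ↦ (x mod V, x mod W)` has kernel `V ⊓ W`, so it factors injectively through `E ⧸ (V ⊓ W)` and is
antilipschitz there, while quotient norms are distances to subspaces. Translating to a common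
point, the same holds for `G₁` and the affine span `L` of `G₂`.

Given `Y`, with `d = max (dist(Y, G₁), dist(Y, G₂))`, this gives a point `x ∈ G₁ ∩ L` at distance
`O(d)` from `Y`, hence also at distance `O(d)` from `G₂`. Since `G₂` contains a ball of some radius
`r` about `Ỹ` relative to `L`, convexity shows that moving `x` towards `Ỹ` by the fraction
`O(d / r)` of the way lands in `G₂`, and it stays in `G₁`. Boundedness of `B` bounds `dist(x, Ỹ)`.
-/

open Metric Set

theorem Submodule.Quotient.norm_mk_eq_infDist {R M : Type*} [Ring R] [SeminormedAddCommGroup M]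
    [Module R M] (S : Submodule R M) (x : M) :
    ‖(Submodule.Quotient.mk x : M ⧸ S)‖ = infDist x (S : Set M) :=
  QuotientAddGroup.norm_mk (S := S.toAddSubgroup) x

section Regularity

variable {𝕜 E F : Type*} [NontriviallyNormedField 𝕜] [CompleteSpace 𝕜]
  [NormedAddCommGroup E] [NormedSpace 𝕜 E] [FiniteDimensional 𝕜 E]
  [NormedAddCommGroup F] [NormedSpace 𝕜 F]

theorem LinearMap.exists_infDist_ker_le (f : E →ₗ[𝕜] F) :
    ∃ C > 0, ∀ x, infDist x (LinearMap.ker f : Set E) ≤ C * ‖f x‖ := by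
  have : IsClosed (LinearMap.ker f : Set E) := (LinearMap.ker f).closed_of_finiteDimensional
  obtain ⟨K, hK, hanti⟩ := ((LinearMap.ker f).liftQ f le_rfl).exists_antilipschitzWith
    (Submodule.ker_liftQ_eq_bot _ _ _ le_rfl)
  refine ⟨K, hK, fun x => ?_⟩
  have h := hanti.le_mul_dist (Submodule.Quotient.mk x) 0
  rw [dist_zero_right, map_zero, dist_zero_right] at h
  rwa [Submodule.Quotient.norm_mk_eq_infDist] at h

theorem Submodule.exists_infDist_inf_le_max (V W : Submodule 𝕜 E) :
    ∃ C > 0, ∀ x, infDist x ((V ⊓ W : Submodule 𝕜 E) : Set E)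
      ≤ C * max (infDist x (V : Set E)) (infDist x (W : Set E)) := by
  have : IsClosed (V : Set E) := V.closed_of_finiteDimensional
  have : IsClosed (W : Set E) := W.closed_of_finiteDimensional
  obtain ⟨C, hC, h⟩ := (V.mkQ.prod W.mkQ).exists_infDist_ker_le
  refine ⟨C, hC, fun x => ?_⟩
  have hx := h x
  rw [LinearMap.ker_prod, Submodule.ker_mkQ, Submodule.ker_mkQ] at hx
  simpa only [LinearMap.prod_apply, Function.prod, Prod.norm_mk, Submodule.mkQ_apply,
    Submodule.Quotient.norm_mk_eq_infDist] using hx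

end Regularity

theorem AffineSubspace.infDist_eq_infDist_direction {k V P : Type*} [Ring k]
    [NormedAddCommGroup V] [Module k V] [MetricSpace P] [NormedAddTorsor V P]
    {A : AffineSubspace k P} {p : P} (hp : p ∈ A) (x : P) :
    infDist x (A : Set P) = infDist (x -ᵥ p) (A.direction : Set V) := by
  rw [coe_direction_eq_vsub_set_right hp,
    ← infDist_image (IsometryEquiv.vaddConst p).symm.isometry]
  rfl

theorem AffineSubspace.exists_infDist_inf_le_max {𝕜 V P : Type*} [NontriviallyNormedField 𝕜]
    [CompleteSpace 𝕜] [NormedAddCommGroup V] [NormedSpace 𝕜 V] [FiniteDimensional 𝕜 V]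
    [MetricSpace P] [NormedAddTorsor V P]
    {A B : AffineSubspace 𝕜 P} {p : P} (hpA : p ∈ A) (hpB : p ∈ B) :
    ∃ C > 0, ∀ x, infDist x ((A ⊓ B : AffineSubspace 𝕜 P) : Set P)
      ≤ C * max (infDist x (A : Set P)) (infDist x (B : Set P)) := by
  obtain ⟨C, hC, h⟩ := A.direction.exists_infDist_inf_le_max B.direction
  refine ⟨C, hC, fun x => ?_⟩
  rw [infDist_eq_infDist_direction (show p ∈ A ⊓ B from ⟨hpA, hpB⟩),
    direction_inf_of_mem hpA hpB, infDist_eq_infDist_direction hpA,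
    infDist_eq_infDist_direction hpB]
  exact h _

section ConvexSet

variable {E : Type*} [NormedAddCommGroup E] [NormedSpace ℝ E]

theorem exists_closedBall_inter_affineSpan_subset_of_mem_intrinsicInterior {s : Set E} {c : E}
    (hc : c ∈ intrinsicInterior ℝ s) :
    ∃ r > 0, ∀ y ∈ affineSpan ℝ s, dist y c ≤ r → y ∈ s := by
  obtain ⟨c', hc', rfl⟩ := mem_intrinsicInterior.mp hc
  obtain ⟨r, hr, hball⟩ := nhds_basis_closedBall.mem_iff.mp (mem_interior_iff_mem_nhds.mp hc')
  exact ⟨r, hr, fun y hy hyc =>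
    hball (show (⟨y, hy⟩ : affineSpan ℝ s) ∈ closedBall c' r from hyc)⟩

theorem Convex.exists_lineMap_mem_of_closedBall_inter_subset {C : Set E} (hC : Convex ℝ C)
    {L : AffineSubspace ℝ E} {c : E} {r : ℝ} (hc : c ∈ L) (hr : 0 < r)
    (hball : ∀ y ∈ L, dist y c ≤ r → y ∈ C) {x q : E} (hx : x ∈ L) (hq : q ∈ C) (hqL : q ∈ L) :
    ∃ t, 0 ≤ t ∧ t ≤ dist x q / r ∧ AffineMap.lineMap x c t ∈ C := by
  rcases eq_or_ne x q with rfl | hxq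
  · exact ⟨0, le_rfl, by simp, by simpa using hq⟩
  set δ := dist x q
  have hδ : 0 < δ := dist_pos.mpr hxq
  set y := (r / δ) • (x - q) + c
  have hyL : y ∈ L :=
    AffineSubspace.vadd_mem_of_mem_direction
      (L.direction.smul_mem _ (AffineSubspace.vsub_mem_direction hx hqL)) hc
  have hyc : dist y c = r := by
    rw [dist_eq_norm, add_sub_cancel_right, norm_smul, ← dist_eq_norm,
      Real.norm_of_nonneg (by positivity), div_mul_cancel₀ r hδ.ne']
  -- `lineMap x c (δ / (δ + r))` is this convex combination of `q` and `y`
  have hcomb := hC hq (hball y hyL hyc.le) (a := r / (δ + r)) (b := δ / (δ + r))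
    (by positivity) (by positivity) (by field_simp; ring)
  refine ⟨δ / (δ + r), by positivity, div_le_div_of_nonneg_left hδ.le hr (by linarith), ?_⟩
  convert hcomb using 1
  rw [AffineMap.lineMap_apply_module]
  simp only [y, smul_add, smul_smul]
  field_simp
  module

theorem exists_infDist_inter_le_of_mem_intrinsicInterior [FiniteDimensional ℝ E]
    {A : AffineSubspace ℝ E} {C : Set E} (hCconv : Convex ℝ C) (hCclosed : IsClosed C)
    {c : E} (hcA : c ∈ A) (hcC : c ∈ intrinsicInterior ℝ C) :
    ∃ κ > 0, ∃ r > 0, ∀ y, infDist y ((A : Set E) ∩ C)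
      ≤ (κ + (κ + 1) ^ 2 * dist y c / r) * max (infDist y (A : Set E)) (infDist y C) := by
  set L := affineSpan ℝ C
  have hcC' : c ∈ C := intrinsicInterior_subset hcC
  have hcL : c ∈ L := subset_affineSpan ℝ C hcC'
  obtain ⟨κ, hκ, hreg⟩ := AffineSubspace.exists_infDist_inf_le_max hcA hcL
  obtain ⟨r, hr, hball⟩ := exists_closedBall_inter_affineSpan_subset_of_mem_intrinsicInterior hcC
  refine ⟨κ, hκ, r, hr, fun y => ?_⟩
  set d := max (infDist y (A : Set E)) (infDist y C)
  have hd : 0 ≤ d := le_max_of_le_left infDist_nonneg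
  have hdc : d ≤ dist y c :=
    max_le (infDist_le_dist_of_mem hcA) (infDist_le_dist_of_mem hcC')
  obtain ⟨x, hxAL, hyx⟩ := (A ⊓ L).closed_of_finiteDimensional.exists_infDist_eq_dist
    ⟨c, hcA, hcL⟩ y
  have hyx' : dist y x ≤ κ * d := by
    rw [← hyx]
    refine (hreg y).trans (mul_le_mul_of_nonneg_left (max_le_max le_rfl ?_) hκ.le)
    exact infDist_le_infDist_of_subset (subset_affineSpan ℝ C) ⟨c, hcC'⟩
  obtain ⟨q, hqC, hyq⟩ := hCclosed.exists_infDist_eq_dist ⟨c, hcC'⟩ y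
  have hxq : dist x q ≤ (κ + 1) * d := by
    calc dist x q ≤ dist x y + dist y q := dist_triangle _ _ _
      _ ≤ κ * d + d := add_le_add (dist_comm x y ▸ hyx') (hyq ▸ le_max_right _ _)
      _ = (κ + 1) * d := by ring
  have hxc : dist x c ≤ (κ + 1) * dist y c := by
    calc dist x c ≤ dist x y + dist y c := dist_triangle _ _ _
      _ ≤ κ * dist y c + dist y c := by
        rw [dist_comm]; gcongr; exact hyx'.trans (by gcongr)
      _ = (κ + 1) * dist y c := by ring
  obtain ⟨t, ht0, ht, htC⟩ := hCconv.exists_lineMap_mem_of_closedBall_inter_subset hcL hr hball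
    hxAL.2 hqC (subset_affineSpan ℝ C hqC)
  have htA : AffineMap.lineMap x c t ∈ A := AffineMap.lineMap_mem t hxAL.1 hcA
  calc infDist y ((A : Set E) ∩ C) ≤ dist y (AffineMap.lineMap x c t) :=
        infDist_le_dist_of_mem ⟨htA, htC⟩
    _ ≤ dist y x + dist x (AffineMap.lineMap x c t) := dist_triangle _ _ _
    _ = dist y x + t * dist x c := by rw [dist_left_lineMap, Real.norm_of_nonneg ht0]
    _ ≤ κ * d + ((κ + 1) * d / r) * ((κ + 1) * dist y c) := by
        gcongr
        exact ht.trans (by gcongr)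
    _ = (κ + (κ + 1) ^ 2 * dist y c / r) * d := by ring

end ConvexSet

/-- bounded linear regularity criterion: if `G₁` is an affine subspace and `G₂`
a closed convex set with a point `Ỹ ∈ G₁ ∩ ri(G₂)`, then for every bounded set `B` there is
`κ > 0` with `dist(Y, G₁ ∩ G₂) ≤ κ max{dist(Y,G₁), dist(Y,G₂)}` for all `Y ∈ B`. -/
theorem stmt15 {E : Type*} [NormedAddCommGroup E] [InnerProductSpace ℝ E]
    [FiniteDimensional ℝ E]
    (G1 : AffineSubspace ℝ E) (G2 : Set E)
    (hG2conv : Convex ℝ G2) (hG2closed : IsClosed G2)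
    (Ytil : E) (hYtil : Ytil ∈ (G1 : Set E) ∩ intrinsicInterior ℝ G2)
    (B : Set E) (hB : Bornology.IsBounded B) :
    ∃ κ > (0:ℝ), ∀ Y ∈ B,
      Metric.infDist Y ((G1 : Set E) ∩ G2)
        ≤ κ * max (Metric.infDist Y (G1 : Set E)) (Metric.infDist Y G2) := by
  obtain ⟨κ, hκ, r, hr, hbound⟩ :=
    exists_infDist_inter_le_of_mem_intrinsicInterior hG2conv hG2closed hYtil.1 hYtil.2
  obtain ⟨M, hM, hBM⟩ := hB.subset_closedBall_lt 0 Ytil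
  refine ⟨κ + (κ + 1) ^ 2 * M / r, by positivity, fun Y hY => (hbound Y).trans ?_⟩
  have hd : 0 ≤ max (infDist Y (G1 : Set E)) (infDist Y G2) :=
    le_max_of_le_left infDist_nonneg
  gcongr
  exact hBM hY
end

section
/- With B and Q as in the Hadamard-product SDP above and q ≥ n − 1, the multiplier set at X̄ = 0 is M(X̄) = {(Y, Z) ∈ S^n × S^n : Y + B∘Z = 0, Y ∈ S^n_-}, and this set is unbounded; consequently (by the Zowe–Kurcyusz characterization) the Robinson constraint qualification fails at X̄. -/
/-!
At `X̄ = 0` the term `Q ∘ X̄` vanishes, and the normal-cone condition `tr (Y X') ≤ 0` for all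
`X' ⪰ 0` says exactly `-Y ⪰ 0`, because the positive semidefinite cone is self-dual: testing
against rank-one matrices `x xᵀ` gives `xᵀ (-Y) x ≥ 0`, and every `X' ⪰ 0` is a sum of such.
Since `B` vanishes away from the last row and column, `Y = 0` together with any `Z` supported
at the entry `(0, 0)` is a multiplier, so the multiplier set is unbounded.
-/

open Matrix

namespace Matrix

variable {n : Type*}

lemma IsSymm.of_posSemidef_neg {Y : Matrix n n ℝ} (hY : (-Y).PosSemidef) : Y.IsSymm := by
  simpa using (isHermitian_iff_isSymm.mp hY.isHermitian).neg

lemma hadamard_single_of_apply_eq_zero {R : Type*} [MulZeroClass R] [DecidableEq n]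
    {B : Matrix n n R} {i j : n} (hB : B i j = 0) (t : R) : B ⊙ single i j t = 0 := by
  ext k l
  by_cases h : i = k ∧ j = l
  · obtain ⟨rfl, rfl⟩ := h
    simp [hB]
  · simp [h]

variable [Fintype n]

lemma trace_mul_vecMulVec_self {R : Type*} [CommSemiring R] (A : Matrix n n R) (x : n → R) :
    (A * vecMulVec x x).trace = x ⬝ᵥ (A *ᵥ x) := by
  rw [mul_vecMulVec, trace_vecMulVec, dotProduct_comm]

lemma PosSemidef.trace_mul_nonneg {A X : Matrix n n ℝ} (hA : A.PosSemidef)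
    (hX : X.PosSemidef) : 0 ≤ (A * X).trace := by
  obtain ⟨m, v, rfl⟩ := posSemidef_iff_eq_sum_vecMulVec.mp hX
  simp only [star_trivial, Matrix.mul_sum, trace_sum, trace_mul_vecMulVec_self]
  exact Finset.sum_nonneg fun i _ => by simpa using hA.dotProduct_mulVec_nonneg (v i)

lemma posSemidef_iff_trace_mul_nonneg {A : Matrix n n ℝ} (hA : A.IsSymm) :
    A.PosSemidef ↔ ∀ X : Matrix n n ℝ, X.PosSemidef → 0 ≤ (A * X).trace := by
  refine ⟨fun hA' X hX => hA'.trace_mul_nonneg hX, fun h => ?_⟩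
  refine .of_dotProduct_mulVec_nonneg (isHermitian_iff_isSymm.mpr hA) fun x => ?_
  have hx : (vecMulVec x x).PosSemidef := by
    simpa using posSemidef_vecMulVec_self_star x
  simpa [trace_mul_vecMulVec_self] using h _ hx

lemma posSemidef_neg_iff_trace_mul_nonpos {Y : Matrix n n ℝ} (hY : Y.IsSymm) :
    (-Y).PosSemidef ↔ ∀ X : Matrix n n ℝ, X.PosSemidef → (Y * X).trace ≤ 0 := by
  simp only [posSemidef_iff_trace_mul_nonneg hY.neg, Matrix.neg_mul, trace_neg, neg_nonneg]

end Matrix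

theorem stmt19_general (n : ℕ) (q : ℝ) :
    let last := Fin.last (n+1)
    let B : Matrix (Fin (n+2)) (Fin (n+2)) ℝ :=
      fun i j => if i = last ∨ j = last then 1 else 0
    let Q : Matrix (Fin (n+2)) (Fin (n+2)) ℝ :=
      fun i j => if i = last then (if j = last then -1 else 0)
        else (if j = last then 0 else (if i = j then q else 1))
    let Xbar : Matrix (Fin (n+2)) (Fin (n+2)) ℝ := 0
    -- the multiplier (KKT) set at X̄ = 0 …
    let Mset : Set (Matrix (Fin (n+2)) (Fin (n+2)) ℝ × Matrix (Fin (n+2)) (Fin (n+2)) ℝ) :=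
      {p | p.1.IsSymm ∧ p.2.IsSymm
        ∧ Matrix.hadamard Q Xbar + p.1 + Matrix.hadamard B p.2 = 0
        ∧ ∀ X' : Matrix (Fin (n+2)) (Fin (n+2)) ℝ, X'.PosSemidef → ((p.1 * X').trace ≤ 0)}
    -- … equals {(Y,Z) : Y + B∘Z = 0, Y ∈ S₋}
    Mset = {p | p.2.IsSymm ∧ p.1 + Matrix.hadamard B p.2 = 0 ∧ (-p.1).PosSemidef}
    -- and it is unbounded
    ∧ ∀ c : ℝ, ∃ p ∈ Mset, c < |p.2 0 0| := by
  intro last B Q Xbar Mset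
  have hMset : Mset = {p | p.2.IsSymm ∧ p.1 + B ⊙ p.2 = 0 ∧ (-p.1).PosSemidef} := by
    ext ⟨Y, Z⟩
    simp only [Mset, Xbar, Set.mem_ofPred_eq, hadamard_zero, zero_add]
    exact ⟨fun ⟨hY, hZ, hKKT, hY'⟩ => ⟨hZ, hKKT, (posSemidef_neg_iff_trace_mul_nonpos hY).mpr hY'⟩,
      fun ⟨hZ, hKKT, hY'⟩ => ⟨.of_posSemidef_neg hY', hZ, hKKT,
        (posSemidef_neg_iff_trace_mul_nonpos (.of_posSemidef_neg hY')).mp hY'⟩⟩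
  refine ⟨hMset, fun c => ⟨(0, single 0 0 (|c| + 1)), ?_, ?_⟩⟩
  · have hB : B 0 0 = 0 := by simp [B, last, (Fin.last_pos (n := n)).ne]
    rw [hMset]
    refine ⟨by simp [IsSymm, transpose_single], ?_, by simpa using PosSemidef.zero⟩
    rw [zero_add, hadamard_single_of_apply_eq_zero hB]
  · simp only [single_apply_same]
    rw [abs_of_pos (by positivity)]
    linarith [le_abs_self c]

/-- for the Hadamard-product SDP (matrices of size `n+2`), the multiplier set at
`X̄ = 0` equals `{(Y,Z) : Y + B∘Z = 0, Y ∈ S₋}`, and this set is unbounded (hence, by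
Zowe–Kurcyusz, the Robinson constraint qualification fails at `X̄`). -/
theorem stmt19 (n : ℕ) (q : ℝ) (hq : ((n : ℝ) + 1) ≤ q) :
    let last := Fin.last (n+1)
    let B : Matrix (Fin (n+2)) (Fin (n+2)) ℝ :=
      fun i j => if i = last ∨ j = last then 1 else 0
    let Q : Matrix (Fin (n+2)) (Fin (n+2)) ℝ :=
      fun i j => if i = last then (if j = last then -1 else 0)
        else (if j = last then 0 else (if i = j then q else 1))
    let Xbar : Matrix (Fin (n+2)) (Fin (n+2)) ℝ := 0
    -- the multiplier (KKT) set at X̄ = 0 …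
    let Mset : Set (Matrix (Fin (n+2)) (Fin (n+2)) ℝ × Matrix (Fin (n+2)) (Fin (n+2)) ℝ) :=
      {p | p.1.IsSymm ∧ p.2.IsSymm
        ∧ Matrix.hadamard Q Xbar + p.1 + Matrix.hadamard B p.2 = 0
        ∧ ∀ X' : Matrix (Fin (n+2)) (Fin (n+2)) ℝ, X'.PosSemidef → ((p.1 * X').trace ≤ 0)}
    -- … equals {(Y,Z) : Y + B∘Z = 0, Y ∈ S₋}
    Mset = {p | p.2.IsSymm ∧ p.1 + Matrix.hadamard B p.2 = 0 ∧ (-p.1).PosSemidef}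
    -- and it is unbounded
    ∧ ∀ c : ℝ, ∃ p ∈ Mset, c < |p.2 0 0| :=
  stmt19_general n q
end
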